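/- arXiv:2006.08384 — 2 statements merged into one kernel-verified Lean document; each statement's English description precedes it below -/
import Mathlib

section
/- Let 1 < p < 2 and n ≥ 1. There exists a constant C = C(n, p) > 0 such that for all vectors a, b ∈ ℝⁿ not both zero, |a − b|² / (|a| + |b|)^{2−p} ≤ C (|a|^{p−2} a − |b|^{p−2} b) · (a − b). -/
/-! With `s = ‖a‖`, `t = ‖b‖` and `u = ⟪a, b⟫`, both sides of the inequality are affine in `u`,
and `|u| ≤ s t` by Cauchy–Schwarz, so it suffices to check the two endpoints `u = ± s t`.
These are one-dimensional inequalities for `x ↦ x ^ (p - 1)`: at `u = s t` it follows from the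
weighted AM-GM inequality `s ^ (2 - p) t ^ (p - 1) ≤ (2 - p) s + (p - 1) t`, and at `u = - s t`
from the subadditivity of `x ↦ x ^ (p - 1)`. The constant is `C = 1 / (p - 1)`. -/

open Real
open scoped RealInnerProductSpace

section Scalar

variable {p s t : ℝ}

lemma mul_sub_le_rpow_mul_rpow_sub_rpow (hp1 : 1 ≤ p) (hp2 : p ≤ 2) (ht : 0 ≤ t) (hts : t ≤ s) :
    (p - 1) * (s - t) ≤ (s + t) ^ (2 - p) * (s ^ (p - 1) - t ^ (p - 1)) := by
  have hs : 0 ≤ s := ht.trans hts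
  have amgm : s ^ (2 - p) * t ^ (p - 1) ≤ (2 - p) * s + (p - 1) * t :=
    geom_mean_le_arith_mean2_weighted (by linarith) (by linarith) hs ht (by ring)
  have split : s = s ^ (2 - p) * s ^ (p - 1) := by
    rw [← rpow_add' hs (by norm_num), show 2 - p + (p - 1) = 1 by ring, rpow_one]
  calc (p - 1) * (s - t) ≤ s - s ^ (2 - p) * t ^ (p - 1) := by linarith
    _ = s ^ (2 - p) * (s ^ (p - 1) - t ^ (p - 1)) := by rw [mul_sub, ← split]
    _ ≤ (s + t) ^ (2 - p) * (s ^ (p - 1) - t ^ (p - 1)) := by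
      gcongr
      · exact sub_nonneg.2 (rpow_le_rpow ht hts (by linarith))
      · linarith

lemma mul_sq_sub_le_rpow_mul_rpow_sub_rpow_mul_sub (hp1 : 1 ≤ p) (hp2 : p ≤ 2) (hs : 0 ≤ s)
    (ht : 0 ≤ t) :
    (p - 1) * (s - t) ^ 2 ≤ (s + t) ^ (2 - p) * ((s ^ (p - 1) - t ^ (p - 1)) * (s - t)) := by
  rcases le_total t s with hts | hst
  · have := mul_le_mul_of_nonneg_right (mul_sub_le_rpow_mul_rpow_sub_rpow hp1 hp2 ht hts)
      (sub_nonneg.2 hts)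
    linarith
  · have := mul_le_mul_of_nonneg_right (mul_sub_le_rpow_mul_rpow_sub_rpow hp1 hp2 hs hst)
      (sub_nonneg.2 hst)
    rw [add_comm t] at this
    linarith

lemma mul_sq_add_le_rpow_mul_rpow_add_rpow_mul_add (hp1 : 1 ≤ p) (hp2 : p ≤ 2) (hs : 0 ≤ s)
    (ht : 0 ≤ t) :
    (p - 1) * (s + t) ^ 2 ≤ (s + t) ^ (2 - p) * ((s ^ (p - 1) + t ^ (p - 1)) * (s + t)) := by
  have hst : 0 ≤ s + t := add_nonneg hs ht
  have split : s + t = (s + t) ^ (2 - p) * (s + t) ^ (p - 1) := by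
    rw [← rpow_add' hst (by norm_num), show 2 - p + (p - 1) = 1 by ring, rpow_one]
  calc (p - 1) * (s + t) ^ 2 ≤ (s + t) * (s + t) := by nlinarith
    _ = (s + t) ^ (2 - p) * ((s + t) ^ (p - 1) * (s + t)) := by rw [← mul_assoc, ← split]
    _ ≤ (s + t) ^ (2 - p) * ((s ^ (p - 1) + t ^ (p - 1)) * (s + t)) := by
      gcongr
      exact rpow_add_le_add_rpow hs ht (by linarith) (by linarith)

end Scalar

lemma nonneg_affine_of_abs_le {α β u m : ℝ} (hu : |u| ≤ m) (hpos : 0 ≤ α + β * m)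
    (hneg : 0 ≤ α - β * m) : 0 ≤ α + β * u := by
  obtain ⟨hlo, hhi⟩ := abs_le.1 hu
  rcases le_total 0 β with hβ | hβ <;> nlinarith

lemma mul_norm_sub_sq_le_rpow_mul_inner {E : Type*} [NormedAddCommGroup E]
    [InnerProductSpace ℝ E] {p : ℝ} (hp1 : 1 < p) (hp2 : p ≤ 2) (a b : E) :
    (p - 1) * ‖a - b‖ ^ 2 ≤
      (‖a‖ + ‖b‖) ^ (2 - p) * ⟪‖a‖ ^ (p - 2) • a - ‖b‖ ^ (p - 2) • b, a - b⟫ := by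
  set s := ‖a‖
  set t := ‖b‖
  set K := (s + t) ^ (2 - p)
  have hs : 0 ≤ s := norm_nonneg a
  have ht : 0 ≤ t := norm_nonneg b
  have hpow : ∀ x : ℝ, 0 ≤ x → x ^ (p - 1) = x ^ (p - 2) * x := fun x hx => by
    rw [← rpow_add_one' hx (by linarith), show p - 2 + 1 = p - 1 by ring]
  have hnorm : ‖a - b‖ ^ 2 = s ^ 2 + t ^ 2 - 2 * ⟪a, b⟫ := by
    rw [norm_sub_sq_real]; ring
  have hinner : ⟪s ^ (p - 2) • a - t ^ (p - 2) • b, a - b⟫ =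
      s ^ (p - 2) * s ^ 2 + t ^ (p - 2) * t ^ 2 - (s ^ (p - 2) + t ^ (p - 2)) * ⟪a, b⟫ := by
    simp only [inner_sub_left, inner_sub_right, real_inner_smul_left,
      real_inner_self_eq_norm_sq, real_inner_comm a b]
    ring
  have hminus := mul_sq_sub_le_rpow_mul_rpow_sub_rpow_mul_sub hp1.le hp2 hs ht
  have hplus := mul_sq_add_le_rpow_mul_rpow_add_rpow_mul_add hp1.le hp2 hs ht
  rw [hpow s hs, hpow t ht] at hminus hplus
  have hgap := nonneg_affine_of_abs_le (abs_real_inner_le_norm a b)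
    (α := K * (s ^ (p - 2) * s ^ 2 + t ^ (p - 2) * t ^ 2) - (p - 1) * (s ^ 2 + t ^ 2))
    (β := 2 * (p - 1) - K * (s ^ (p - 2) + t ^ (p - 2)))
    (by linarith) (by linarith)
  rw [hnorm, hinner]
  linarith

theorem stmt_8_general (n : ℕ) (p : ℝ) (hp1 : 1 < p) (hp2 : p < 2) :
    ∃ C : ℝ, 0 < C ∧ ∀ a b : EuclideanSpace ℝ (Fin n), ¬(a = 0 ∧ b = 0) →
      ‖a - b‖ ^ (2:ℝ) / (‖a‖ + ‖b‖) ^ (2 - p)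
        ≤ C * ⟪‖a‖ ^ (p - 2) • a - ‖b‖ ^ (p - 2) • b, a - b⟫ := by
  refine ⟨(p - 1)⁻¹, inv_pos.2 (by linarith), fun a b hab => ?_⟩
  have hpos : 0 < ‖a‖ + ‖b‖ := by
    rcases not_and_or.1 hab with ha | hb
    · exact add_pos_of_pos_of_nonneg (norm_pos_iff.2 ha) (norm_nonneg b)
    · exact add_pos_of_nonneg_of_pos (norm_nonneg a) (norm_pos_iff.2 hb)
  rw [rpow_two, div_le_iff₀ (rpow_pos_of_pos hpos _), mul_right_comm, mul_assoc,
    le_inv_mul_iff₀ (by linarith)]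
  exact mul_norm_sub_sq_le_rpow_mul_inner hp1 hp2.le a b

theorem stmt_8 (n : ℕ) (hn : 1 ≤ n) (p : ℝ) (hp1 : 1 < p) (hp2 : p < 2) :
    ∃ C : ℝ, 0 < C ∧ ∀ a b : EuclideanSpace ℝ (Fin n), ¬(a = 0 ∧ b = 0) →
      ‖a - b‖ ^ (2:ℝ) / (‖a‖ + ‖b‖) ^ (2 - p)
        ≤ C * ⟪‖a‖ ^ (p - 2) • a - ‖b‖ ^ (p - 2) • b, a - b⟫ :=
  stmt_8_general n p hp1 hp2
end

section
/- Let n ≥ 1, 0 < s < 1, 1 < p < ∞ with n > sp, and let F : ℝⁿ → ℝ be bounded and globally Lipschitz. Fix x₀ ∈ ℝⁿ, r > 0, 0 < ρ < r, and a function η ∈ C²_c(B_r(x₀)) with 0 ≤ η ≤ 1. Then for every ε > 0 there exists θ̃ > 0 such that for all 0 ≤ θ < θ̃ and all x ∈ B_ρ(x₀), | D_s^p F(x) − D_s^p (F + θη)(x) | < ε, where D_s^p v(x) = ∫_{ℝⁿ} |v(x) − v(y)|^p / |x − y|^{n+sp} dy. -/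
/-!
A bounded Lipschitz function satisfies `|u x - u y| ≤ c * min 1 |x - y|`, and `t ↦ t ^ p` is
Lipschitz on `[0, R]` with constant `p R ^ (p - 1)`. Hence the integrands of `D_s^p F(x)` and
`D_s^p (F + θη)(x)` differ by at most `θ C min 1 |x - y| ^ p / |x - y| ^ (n + s p)`. This bound is
integrable on `ℝⁿ` exactly because `0 < s < 1` (it behaves like `|z| ^ (p - n - s p)` near `0` and
like `|z| ^ (-n - s p)` at infinity), and by translation invariance its integral does not depend on
`x`, so the two quantities differ by `O(θ)` uniformly in `x`.
-/

open MeasureTheory Metric Set Module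

namespace Real

theorem abs_rpow_sub_rpow_le {p a b : ℝ} (hp : 1 ≤ p) (ha : 0 ≤ a) (hb : 0 ≤ b) :
    |a ^ p - b ^ p| ≤ p * max a b ^ (p - 1) * |a - b| := by
  have hderiv : ∀ t ∈ Icc 0 (max a b),
      HasDerivWithinAt (· ^ p) (p * t ^ (p - 1)) (Icc 0 (max a b)) t :=
    fun t _ => (hasDerivAt_rpow_const (Or.inr hp)).hasDerivWithinAt
  have hbound : ∀ t ∈ Icc 0 (max a b), ‖p * t ^ (p - 1)‖ ≤ p * max a b ^ (p - 1) := by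
    intro t ht
    rw [norm_eq_abs, abs_of_nonneg (by have := ht.1; positivity)]
    exact mul_le_mul_of_nonneg_left (rpow_le_rpow ht.1 ht.2 (by linarith)) (by linarith)
  simpa only [norm_eq_abs] using
    (convex_Icc 0 (max a b)).norm_image_sub_le_of_norm_hasDerivWithin_le
      hderiv hbound ⟨hb, le_max_right a b⟩ ⟨ha, le_max_left a b⟩

end Real

theorem abs_abs_rpow_sub_abs_rpow_le {p a b c d m : ℝ} (hp : 1 ≤ p) (hc : 0 ≤ c) (hd : 0 ≤ d)
    (hm : 0 ≤ m) (ha : |a| ≤ c * m) (hba : |b - a| ≤ d * m) :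
    |(|a| ^ p - |b| ^ p)| ≤ p * (c + d) ^ (p - 1) * d * m ^ p := by
  have hb : |b| ≤ (c + d) * m := by
    calc |b| = |a + (b - a)| := by rw [add_sub_cancel]
      _ ≤ |a| + |b - a| := abs_add_le _ _
      _ ≤ (c + d) * m := by linarith
  have hmax : max |a| |b| ≤ (c + d) * m := max_le (ha.trans (by nlinarith)) hb
  calc |(|a| ^ p - |b| ^ p)| ≤ p * max |a| |b| ^ (p - 1) * |(|a| - |b|)| :=
        Real.abs_rpow_sub_rpow_le hp (abs_nonneg a) (abs_nonneg b)
    _ ≤ p * ((c + d) * m) ^ (p - 1) * (d * m) :=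
        mul_le_mul (mul_le_mul_of_nonneg_left
          (Real.rpow_le_rpow (by positivity) hmax (by linarith)) (by linarith))
          ((abs_abs_sub_abs_le_abs_sub a b).trans (abs_sub_comm a b ▸ hba))
          (abs_nonneg _) (by positivity)
    _ = p * (c + d) ^ (p - 1) * d * m ^ p := by
        rw [Real.mul_rpow (by positivity) hm, ← sub_add_cancel p 1,
          Real.rpow_add_one' hm (by linarith : (0 : ℝ) < p - 1 + 1).ne', add_sub_cancel_right]
        ring

theorem exists_abs_sub_le_mul_min_one_dist {α : Type*} [PseudoMetricSpace α] {u : α → ℝ}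
    (hbdd : ∃ M, ∀ x, |u x| ≤ M) (hlip : ∃ L, LipschitzWith L u) :
    ∃ c, 0 ≤ c ∧ ∀ x y, |u x - u y| ≤ c * min 1 (dist x y) := by
  obtain ⟨M, hM⟩ := hbdd
  obtain ⟨L, hL⟩ := hlip
  refine ⟨max (2 * M) L, le_max_of_le_right L.coe_nonneg, fun x y => ?_⟩
  have hLip : |u x - u y| ≤ L * dist x y := by simpa only [Real.dist_eq] using hL.dist_le_mul x y
  rcases le_total (dist x y) 1 with h | h
  · rw [min_eq_right h]
    exact hLip.trans (mul_le_mul_of_nonneg_right (le_max_right _ _) dist_nonneg)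
  · rw [min_eq_left h, mul_one]
    linarith [abs_sub (u x) (u y), hM x, hM y, le_max_left (2 * M) L]

/-- The paper's `D_s^p u(x)` on `ℝⁿ` is `fracGrad volume p (n + s * p) u x`. -/
noncomputable def fracGrad {E : Type*} [NormedAddCommGroup E] [MeasurableSpace E]
    (μ : Measure E) (p q : ℝ) (u : E → ℝ) (x : E) : ℝ :=
  ∫ y, |u x - u y| ^ p / ‖x - y‖ ^ q ∂μ

variable {E : Type*} [NormedAddCommGroup E] [NormedSpace ℝ E] [FiniteDimensional ℝ E]
  [MeasurableSpace E] [BorelSpace E] (μ : Measure E) [μ.IsAddHaarMeasure]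

theorem integrable_min_one_norm_rpow_div_norm_rpow [Nontrivial E] {p q : ℝ}
    (hq : finrank ℝ E < q) (hqp : q < finrank ℝ E + p) :
    Integrable (fun z : E => min 1 ‖z‖ ^ p / ‖z‖ ^ q) μ := by
  set d := finrank ℝ E
  have hd : 1 ≤ d := finrank_pos
  rw [integrable_fun_norm_addHaar μ (f := fun t => min 1 t ^ p / t ^ q)]
  have hpow : ∀ t : ℝ, 0 < t →
      t ^ (d - 1) • (min 1 t ^ p / t ^ q) = min 1 t ^ p * t ^ ((d : ℝ) - 1 - q) := by
    intro t ht
    rw [smul_eq_mul, Real.rpow_sub ht, Real.rpow_sub_one ht.ne', Real.rpow_natCast,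
      pow_sub₀ t ht.ne' hd, pow_one]
    ring
  rw [← Ioc_union_Ioi_eq_Ioi zero_le_one]
  refine IntegrableOn.union ?_ ?_
  · have hint : IntegrableOn (fun t : ℝ => t ^ (p + ((d : ℝ) - 1 - q))) (Ioc 0 1) :=
      (intervalIntegrable_iff_integrableOn_Ioc_of_le zero_le_one).1
        (intervalIntegral.intervalIntegrable_rpow' (by linarith))
    refine hint.congr_fun (fun t ht => ?_) measurableSet_Ioc
    beta_reduce
    rw [hpow t ht.1, min_eq_right ht.2, Real.rpow_add ht.1]
  · refine (integrableOn_Ioi_rpow_of_lt (a := (d : ℝ) - 1 - q) (by linarith) zero_lt_one).congr_fun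
      (fun t ht => ?_) measurableSet_Ioi
    rw [hpow t (zero_lt_one.trans ht), min_eq_left (le_of_lt ht), Real.one_rpow, one_mul]

variable {μ}

theorem integrable_abs_sub_rpow_div_norm_sub_rpow [Nontrivial E] {p q c : ℝ} {u : E → ℝ}
    {x : E} (hp : 0 ≤ p) (hq : finrank ℝ E < q) (hqp : q < finrank ℝ E + p) (hc : 0 ≤ c)
    (hu_meas : Measurable u) (hu : ∀ y, |u x - u y| ≤ c * min 1 ‖x - y‖) :
    Integrable (fun y => |u x - u y| ^ p / ‖x - y‖ ^ q) μ := by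
  refine (((integrable_min_one_norm_rpow_div_norm_rpow μ hq hqp).comp_sub_left x).const_mul
    (c ^ p)).mono' ?_ (ae_of_all _ fun y => ?_)
  · exact ((measurable_const.sub hu_meas).abs.pow_const p).div
      ((measurable_const.sub measurable_id).norm.pow_const q) |>.aestronglyMeasurable
  · rw [Real.norm_eq_abs, abs_of_nonneg (by positivity), ← mul_div_assoc,
      ← Real.mul_rpow hc (by positivity)]
    gcongr
    exact hu y

theorem abs_fracGrad_sub_fracGrad_add_le [Nontrivial E] {p q c d : ℝ} {u w : E → ℝ} {x : E}
    (hp : 1 ≤ p) (hq : finrank ℝ E < q) (hqp : q < finrank ℝ E + p) (hc : 0 ≤ c) (hd : 0 ≤ d)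
    (hu_meas : Measurable u) (hw_meas : Measurable w)
    (hu : ∀ y, |u x - u y| ≤ c * min 1 ‖x - y‖) (hw : ∀ y, |w x - w y| ≤ d * min 1 ‖x - y‖) :
    |fracGrad μ p q u x - fracGrad μ p q (fun y => u y + w y) x| ≤
      p * (c + d) ^ (p - 1) * d * ∫ z, min 1 ‖z‖ ^ p / ‖z‖ ^ q ∂μ := by
  have huw : ∀ y, |(u x + w x) - (u y + w y)| ≤ (c + d) * min 1 ‖x - y‖ := fun y => by
    calc |(u x + w x) - (u y + w y)| = |(u x - u y) + (w x - w y)| := by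
          rw [add_sub_add_comm]
      _ ≤ |u x - u y| + |w x - w y| := abs_add_le _ _
      _ ≤ (c + d) * min 1 ‖x - y‖ := by linarith [hu y, hw y]
  have hpt : ∀ y, ‖|u x - u y| ^ p / ‖x - y‖ ^ q - |(u x + w x) - (u y + w y)| ^ p / ‖x - y‖ ^ q‖
      ≤ p * (c + d) ^ (p - 1) * d * (min 1 ‖x - y‖ ^ p / ‖x - y‖ ^ q) := fun y => by
    have hq_nonneg : 0 ≤ ‖x - y‖ ^ q := Real.rpow_nonneg (norm_nonneg _) q
    rw [div_sub_div_same, Real.norm_eq_abs, abs_div, abs_of_nonneg hq_nonneg, ← mul_div_assoc]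
    refine div_le_div_of_nonneg_right (abs_abs_rpow_sub_abs_rpow_le hp hc hd
      (le_min zero_le_one (norm_nonneg _)) (hu y) ?_) hq_nonneg
    rw [show (u x + w x) - (u y + w y) - (u x - u y) = w x - w y by ring]
    exact hw y
  have hmeas_uw : Measurable fun y => u y + w y := hu_meas.add hw_meas
  unfold fracGrad
  rw [← integral_sub (integrable_abs_sub_rpow_div_norm_sub_rpow (by linarith) hq hqp hc hu_meas hu)
    (integrable_abs_sub_rpow_div_norm_sub_rpow (by linarith) hq hqp (by linarith) hmeas_uw huw),
    ← integral_sub_left_eq_self (fun z => min 1 ‖z‖ ^ p / ‖z‖ ^ q) μ x, ← integral_const_mul]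
  exact norm_integral_le_of_norm_le
    (((integrable_min_one_norm_rpow_div_norm_rpow μ hq hqp).comp_sub_left x).const_mul _)
    (ae_of_all _ hpt)

theorem abs_fracGrad_sub_fracGrad_add_mul_le [Nontrivial E] {p q c d θ : ℝ} {u w : E → ℝ}
    {x : E} (hp : 1 ≤ p) (hq : finrank ℝ E < q) (hqp : q < finrank ℝ E + p) (hc : 0 ≤ c)
    (hd : 0 ≤ d) (hθ0 : 0 ≤ θ) (hθ1 : θ ≤ 1) (hu_meas : Measurable u) (hw_meas : Measurable w)
    (hu : ∀ y, |u x - u y| ≤ c * min 1 ‖x - y‖) (hw : ∀ y, |w x - w y| ≤ d * min 1 ‖x - y‖) :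
    |fracGrad μ p q u x - fracGrad μ p q (fun y => u y + θ * w y) x| ≤
      θ * (p * (c + d) ^ (p - 1) * d * ∫ z, min 1 ‖z‖ ^ p / ‖z‖ ^ q ∂μ) := by
  have hθw : ∀ y, |θ * w x - θ * w y| ≤ θ * d * min 1 ‖x - y‖ := fun y => by
    rw [← mul_sub, abs_mul, abs_of_nonneg hθ0, mul_assoc]
    exact mul_le_mul_of_nonneg_left (hw y) hθ0
  have hI : 0 ≤ ∫ z, min 1 ‖z‖ ^ p / ‖z‖ ^ q ∂μ := integral_nonneg fun z => by positivity
  have hmono : (c + θ * d) ^ (p - 1) ≤ (c + d) ^ (p - 1) :=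
    Real.rpow_le_rpow (by positivity) (by nlinarith) (by linarith)
  calc _ ≤ p * (c + θ * d) ^ (p - 1) * (θ * d) * ∫ z, min 1 ‖z‖ ^ p / ‖z‖ ^ q ∂μ :=
        abs_fracGrad_sub_fracGrad_add_le hp hq hqp hc (by positivity) hu_meas
          (measurable_const.mul hw_meas) hu hθw
    _ = θ * (p * (c + θ * d) ^ (p - 1) * d * ∫ z, min 1 ‖z‖ ^ p / ‖z‖ ^ q ∂μ) := by ring
    _ ≤ _ := by gcongr

theorem stmt_15_general (n : ℕ) (s p : ℝ) (hs0 : 0 < s) (hs1 : s < 1)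
    (hp : 1 < p) (hnsp : s * p < n)
    (F : EuclideanSpace ℝ (Fin n) → ℝ)
    (hFb : ∃ M : ℝ, ∀ x, |F x| ≤ M) (hFlip : ∃ L : NNReal, LipschitzWith L F)
    (x₀ : EuclideanSpace ℝ (Fin n)) (r ρ : ℝ)
    (η : EuclideanSpace ℝ (Fin n) → ℝ) (hη : ContDiff ℝ 2 η)
    (hηsupp : tsupport η ⊆ Metric.ball x₀ r) :
    ∀ ε : ℝ, 0 < ε → ∃ θt : ℝ, 0 < θt ∧ ∀ θ : ℝ, 0 ≤ θ → θ < θt →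
      ∀ x ∈ Metric.ball x₀ ρ,
        |(∫ y, |F x - F y| ^ p / ‖x - y‖ ^ ((n : ℝ) + s * p)) -
          ∫ y, |(F x + θ * η x) - (F y + θ * η y)| ^ p / ‖x - y‖ ^ ((n : ℝ) + s * p)|
          < ε := by
  intro ε hε
  have hηc : HasCompactSupport η :=
    isCompact_of_isClosed_isBounded (isClosed_tsupport η) (isBounded_ball.subset hηsupp)
  obtain ⟨L, hL⟩ := hFlip
  obtain ⟨cF, hcF, hFmod⟩ := exists_abs_sub_le_mul_min_one_dist hFb ⟨L, hL⟩
  obtain ⟨cη, hcη, hηmod⟩ := exists_abs_sub_le_mul_min_one_dist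
    (hηc.exists_bound_of_continuous hη.continuous |>.imp fun _ h x => by
      simpa only [Real.norm_eq_abs] using h x)
    (hη.lipschitzWith_of_hasCompactSupport hηc (by norm_num))
  have hsp : 0 < s * p := mul_pos hs0 (by linarith)
  have hsp1 : s * p < p := by nlinarith
  have : NeZero n := ⟨by rintro rfl; norm_num at hnsp; linarith⟩
  have hdim : (finrank ℝ (EuclideanSpace ℝ (Fin n)) : ℝ) = n := by simp
  set I := ∫ z : EuclideanSpace ℝ (Fin n), min 1 ‖z‖ ^ p / ‖z‖ ^ ((n : ℝ) + s * p)
  set C := p * (cF + cη) ^ (p - 1) * cη * I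
  have hC : 0 ≤ C :=
    mul_nonneg (mul_nonneg (mul_nonneg (by linarith) (by positivity)) hcη)
      (integral_nonneg fun z => by positivity)
  refine ⟨min 1 (ε / (C + 1)), lt_min one_pos (div_pos hε (by linarith)),
    fun θ hθ0 hθ x _ => ?_⟩
  have hθC := (lt_div_iff₀ (by linarith)).1 (hθ.trans_le (min_le_right _ _))
  calc _ ≤ θ * C :=
        abs_fracGrad_sub_fracGrad_add_mul_le (μ := volume) hp.le (by linarith) (by linarith)
          hcF hcη hθ0 (hθ.le.trans (min_le_left _ _)) hL.continuous.measurable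
          hη.continuous.measurable (fun y => by simpa only [dist_eq_norm] using hFmod x y)
          (fun y => by simpa only [dist_eq_norm] using hηmod x y)
    _ < ε := by nlinarith

theorem stmt_15 (n : ℕ) (hn : 1 ≤ n) (s p : ℝ) (hs0 : 0 < s) (hs1 : s < 1)
    (hp : 1 < p) (hnsp : s * p < n)
    (F : EuclideanSpace ℝ (Fin n) → ℝ)
    (hFb : ∃ M : ℝ, ∀ x, |F x| ≤ M) (hFlip : ∃ L : NNReal, LipschitzWith L F)
    (x₀ : EuclideanSpace ℝ (Fin n)) (r ρ : ℝ) (hρ : 0 < ρ) (hρr : ρ < r)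
    (η : EuclideanSpace ℝ (Fin n) → ℝ) (hη : ContDiff ℝ 2 η)
    (hηsupp : tsupport η ⊆ Metric.ball x₀ r)
    (hη0 : ∀ x, 0 ≤ η x) (hη1 : ∀ x, η x ≤ 1) :
    ∀ ε : ℝ, 0 < ε → ∃ θt : ℝ, 0 < θt ∧ ∀ θ : ℝ, 0 ≤ θ → θ < θt →
      ∀ x ∈ Metric.ball x₀ ρ,
        |(∫ y, |F x - F y| ^ p / ‖x - y‖ ^ ((n : ℝ) + s * p)) -
          ∫ y, |(F x + θ * η x) - (F y + θ * η y)| ^ p / ‖x - y‖ ^ ((n : ℝ) + s * p)|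
          < ε :=
  stmt_15_general n s p hs0 hs1 hp hnsp F hFb hFlip x₀ r ρ η hη hηsupp
end
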